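/- For a coherent configuration with basis satisfying (B1)-(B4), the Krein numbers admit the explicit expression q_{ℓ,ℓ',n}^{(i,j)} = (√(|X_i||X_j|) m_ℓ^{(i,j)} m_{ℓ'}^{(i,j)} / |X_i|^2) Σ_ν (1/(k_ν^{(i,j)})^2) p_ν^{(i,j)}(ℓ) p_ν^{(i,j)}(ℓ') p_ν^{(i,j)}(n), with sum over all relations ν between X_i and X_j. -/

import Mathlib

/-!
The adjacency matrices `A_ν` of the block `(i, j)` are `0/1` matrices with disjoint supports,
hence orthogonal idempotents for the Hadamard product. Expanding `E_ℓ ⊙ E_ℓ'` in the `A_ν` and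
each `A_ν` back in the `E_p`, linear independence of the `E_p` gives
`q_{ℓ,ℓ',n} = c Σ_ν Q_ℓν Q_ℓ'ν P_νn` with `c = (|X_i| |X_j|)^(-1/2)`. The dual eigenmatrix is
then eliminated by evaluating `tr (E_ℓ A_νᵀ)` in two ways: through the `A`-expansion of `E_ℓ` it
is `c Q_ℓν |X_i| k_ν`, through the `E`-expansion of `A_ν` it is `P_νℓ m_ℓ`, because
`E_ℓ E_pᵀ = δ_ℓp E^{(i,i)}_ℓ` and the idempotent `E^{(i,i)}_ℓ` has trace equal to its rank.

(B4) only constrains indices up to `r`, so this last identity needs `ℓ ≤ r j i` and `ℓ ≤ r i i`;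
both follow from the partition axioms for the `A`'s and the independence of the `E`'s.
-/

open Matrix Finset

theorem Matrix.trace_eq_rank_of_isIdempotentElem {n K : Type*} [Fintype n] [DecidableEq n]
    [Field K] {P : Matrix n n K} (hP : IsIdempotentElem P) : P.trace = P.rank := by
  have hproj : IsIdempotentElem (toLinAlgEquiv' P) := hP.map _
  rw [← trace_toLin'_eq]
  exact ((LinearMap.isProj_range_iff_isIdempotentElem _).mpr hproj).trace

theorem LinearIndependent.of_span_range_le {K M ι : Type*} [DivisionRing K] [AddCommGroup M]
    [Module K M] [Fintype ι] {v w : ι → M} (hv : LinearIndependent K v)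
    (hvw : Submodule.span K (Set.range v) ≤ Submodule.span K (Set.range w)) :
    LinearIndependent K w := by
  rw [linearIndependent_iff_card_le_finrank_span, ← finrank_span_eq_card hv]
  have : FiniteDimensional K (Submodule.span K (Set.range w)) :=
    FiniteDimensional.span_of_finite K (Set.finite_range w)
  exact Submodule.finrank_mono hvw

theorem LinearIndependent.eq_of_sum_range_smul_eq {R M : Type*} [Ring R] [AddCommGroup M]
    [Module R M] {r : ℕ} {E : ℕ → M} (hE : LinearIndependent R fun p : Fin (r + 1) => E p)
    {a b : ℕ → R} (h : ∑ p ∈ range (r + 1), a p • E p = ∑ p ∈ range (r + 1), b p • E p)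
    {n : ℕ} (hn : n ≤ r) : a n = b n := by
  have hsub : ∑ p : Fin (r + 1), (a p - b p) • E p = 0 := by
    simp_rw [sub_smul, sum_sub_distrib]
    rw [Fin.sum_univ_eq_sum_range (fun p => a p • E p),
      Fin.sum_univ_eq_sum_range (fun p => b p • E p), h, sub_self]
  exact sub_eq_zero.mp (Fintype.linearIndependent_iff.mp hE _ hsub ⟨n, by omega⟩)

section Expansion

variable {K M : Type*} [Field K] [AddCommGroup M] [Module K M] {r : ℕ} {E A : ℕ → M} {c : K}
  {Q : ℕ → ℕ → K}

theorem ne_zero_of_eq_smul_sum_smul (hE : LinearIndependent K fun p : Fin (r + 1) => E p)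
    (hQ : ∀ h, h ≤ r → E h = c • ∑ ℓ ∈ range (r + 1), Q h ℓ • A ℓ) : c ≠ 0 := by
  rintro rfl
  exact hE.ne_zero ⟨0, r.succ_pos⟩ (by simpa using hQ 0 r.zero_le)

theorem LinearIndependent.of_eq_smul_sum_smul
    (hE : LinearIndependent K fun p : Fin (r + 1) => E p)
    (hQ : ∀ h, h ≤ r → E h = c • ∑ ℓ ∈ range (r + 1), Q h ℓ • A ℓ) :
    LinearIndependent K fun p : Fin (r + 1) => A p := by
  refine hE.of_span_range_le (Submodule.span_le.mpr ?_)
  rintro _ ⟨h, rfl⟩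
  change E h ∈ _
  rw [hQ h (Nat.le_of_lt_succ h.2)]
  refine Submodule.smul_mem _ _ (Submodule.sum_mem _ fun ℓ hℓ => Submodule.smul_mem _ _ ?_)
  exact Submodule.subset_span ⟨⟨ℓ, mem_range.mp hℓ⟩, rfl⟩

end Expansion

theorem mul_eq_ite_of_zero_one {ι R : Type*} [DecidableEq ι] [Semiring R] [PartialOrder R]
    [IsStrictOrderedRing R] {s : Finset ι} {f : ι → R} (h01 : ∀ μ ∈ s, f μ = 0 ∨ f μ = 1)
    (hle : ∑ μ ∈ s, f μ ≤ 1) {μ ν : ι} (hμ : μ ∈ s) (hν : ν ∈ s) :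
    f μ * f ν = if μ = ν then f ν else 0 := by
  split_ifs with hμν
  · subst hμν
    rcases h01 μ hμ with h | h <;> simp [h]
  rcases h01 μ hμ with h | hμ1
  · simp [h]
  rcases h01 ν hν with h | hν1
  · simp [h]
  have hpair : f μ + f ν ≤ ∑ x ∈ s, f x := by
    rw [← sum_pair hμν]
    refine sum_le_sum_of_subset_of_nonneg (by simp [insert_subset_iff, hμ, hν]) ?_
    intro x hx _
    rcases h01 x hx with h | h <;> simp [h]
  rw [hμ1, hν1] at hpair
  exact absurd (hpair.trans hle) (by simpa using (zero_lt_one (α := R)).not_ge)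

theorem Matrix.hadamard_eq_ite_of_zero_one {ι m n R : Type*} [DecidableEq ι] [Semiring R]
    [PartialOrder R] [IsStrictOrderedRing R] {s : Finset ι} {A : ι → Matrix m n R}
    (h01 : ∀ μ ∈ s, ∀ v w, A μ v w = 0 ∨ A μ v w = 1) (hle : ∀ v w, ∑ μ ∈ s, A μ v w ≤ 1)
    {μ ν : ι} (hμ : μ ∈ s) (hν : ν ∈ s) : A μ ⊙ A ν = if μ = ν then A ν else 0 := by
  ext v w
  rw [hadamard_apply, mul_eq_ite_of_zero_one (fun μ hμ => h01 μ hμ v w) (hle v w) hμ hν]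
  split_ifs <;> rfl

theorem Matrix.sum_smul_hadamard_sum_smul {ι m n R : Type*} [DecidableEq ι] [CommSemiring R]
    {s : Finset ι} {A : ι → Matrix m n R}
    (hA : ∀ μ ∈ s, ∀ ν ∈ s, A μ ⊙ A ν = if μ = ν then A ν else 0) (a b : ι → R) :
    (∑ μ ∈ s, a μ • A μ) ⊙ (∑ ν ∈ s, b ν • A ν) = ∑ μ ∈ s, (a μ * b μ) • A μ := by
  ext v w
  have hA' : ∀ μ ∈ s, ∀ ν ∈ s, A μ v w * A ν v w = if μ = ν then A ν v w else 0 := by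
    intro μ hμ ν hν
    rw [← hadamard_apply, hA μ hμ ν hν]
    split_ifs <;> rfl
  simp only [hadamard_apply, sum_apply, smul_apply, smul_eq_mul, sum_mul_sum]
  refine sum_congr rfl fun μ hμ => ?_
  calc ∑ ν ∈ s, a μ * A μ v w * (b ν * A ν v w)
      = ∑ ν ∈ s, a μ * b ν * (A μ v w * A ν v w) := by
        refine sum_congr rfl fun ν _ => by ring
    _ = a μ * b μ * A μ v w := by
        rw [sum_congr rfl fun ν hν => by rw [hA' μ hμ ν hν]]
        simp [hμ]

theorem Matrix.sum_sum_eq_card_mul_of_row_sum {ι n R : Type*} [Fintype ι] {X : ι → Type*}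
    [∀ a, Fintype (X a)] [Fintype n] [Semiring R] {M : Matrix ((a : ι) × X a) n R} {i : ι}
    {k : R} (hsupp : ∀ v w, v.1 ≠ i → M v w = 0) (hrow : ∀ v, v.1 = i → ∑ w, M v w = k) :
    ∑ v, ∑ w, M v w = Fintype.card (X i) * k := by
  rw [Fintype.sum_sigma, sum_eq_single i]
  · simp [hrow]
  · intro a _ ha
    exact sum_eq_zero fun x _ => sum_eq_zero fun w _ => hsupp ⟨a, x⟩ w ha
  · simp

theorem Matrix.sum_sum_pos_of_nonneg {m n R : Type*} [Fintype m] [Fintype n]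
    [AddCommMonoid R] [PartialOrder R] [IsOrderedCancelAddMonoid R] {M : Matrix m n R}
    (hnonneg : ∀ v w, 0 ≤ M v w) (hM : M ≠ 0) : 0 < ∑ v, ∑ w, M v w := by
  obtain ⟨v, w, hvw⟩ : ∃ v w, M v w ≠ 0 := by
    by_contra! h
    exact hM (Matrix.ext h)
  refine sum_pos' (fun v _ => sum_nonneg fun w _ => hnonneg v w) ⟨v, mem_univ v, ?_⟩
  exact sum_pos' (fun w _ => hnonneg v w) ⟨w, mem_univ w, (hnonneg v w).lt_of_ne' hvw⟩

section Block

variable {K ι : Type*} [Field K] {r : ℕ} {A E : ℕ → Matrix ι ι K} {P Q : ℕ → ℕ → K} {c : K}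

theorem krein_eq_sum_dualEigenmatrix
    (hE : LinearIndependent K fun p : Fin (r + 1) => E p)
    (hAA : ∀ μ ν, μ ≤ r → ν ≤ r → A μ ⊙ A ν = if μ = ν then A ν else 0)
    (hP : ∀ h, h ≤ r → A h = ∑ ℓ ∈ range (r + 1), P h ℓ • E ℓ)
    (hQ : ∀ h, h ≤ r → E h = c • ∑ ℓ ∈ range (r + 1), Q h ℓ • A ℓ)
    {l l' : ℕ} (hl : l ≤ r) (hl' : l' ≤ r) {q : ℕ → K}
    (hq : E l ⊙ E l' = c • ∑ p ∈ range (r + 1), q p • E p) {n : ℕ} (hn : n ≤ r) :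
    q n = c * ∑ μ ∈ range (r + 1), Q l μ * Q l' μ * P μ n := by
  have hc : c ≠ 0 := ne_zero_of_eq_smul_sum_smul hE hQ
  have hAA' : ∀ μ ∈ range (r + 1), ∀ ν ∈ range (r + 1),
      A μ ⊙ A ν = if μ = ν then A ν else 0 := fun μ hμ ν hν =>
    hAA μ ν (mem_range_succ_iff.mp hμ) (mem_range_succ_iff.mp hν)
  have hexp : E l ⊙ E l' =
      c • ∑ p ∈ range (r + 1), (c * ∑ μ ∈ range (r + 1), Q l μ * Q l' μ * P μ p) • E p := by
    rw [hQ l hl, hQ l' hl', smul_hadamard, hadamard_smul, sum_smul_hadamard_sum_smul hAA',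
      smul_smul, mul_smul]
    congr 1
    rw [sum_congr rfl fun μ hμ => by rw [hP μ (mem_range_succ_iff.mp hμ)], smul_sum]
    simp only [smul_sum, smul_smul]
    rw [sum_comm]
    simp only [mul_sum, sum_smul, mul_assoc]
  exact hE.eq_of_sum_range_smul_eq (smul_right_injective _ hc (hq.symm.trans hexp)) hn

variable [Fintype ι]

theorem dualEigenmatrix_mul_sum_eq_eigenmatrix_mul_rank
    (hAA : ∀ μ ν, μ ≤ r → ν ≤ r → A μ ⊙ A ν = if μ = ν then A ν else 0)
    (hEE : ∀ l p, l ≤ r → p ≤ r → (E l * (E p)ᵀ).trace = if l = p then ((E l).rank : K) else 0)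
    (hP : ∀ h, h ≤ r → A h = ∑ ℓ ∈ range (r + 1), P h ℓ • E ℓ)
    (hQ : ∀ h, h ≤ r → E h = c • ∑ ℓ ∈ range (r + 1), Q h ℓ • A ℓ)
    {l ν : ℕ} (hl : l ≤ r) (hν : ν ≤ r) :
    c * Q l ν * ∑ v, ∑ w, A ν v w = P ν l * (E l).rank := by
  have htraceP : (E l * (A ν)ᵀ).trace = P ν l * (E l).rank := by
    rw [hP ν hν]
    simp only [transpose_sum, transpose_smul, Matrix.mul_sum, Matrix.mul_smul, trace_sum,
      trace_smul, smul_eq_mul]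
    rw [sum_congr rfl fun p hp => by rw [hEE l p hl (mem_range_succ_iff.mp hp)]]
    simp [mem_range_succ_iff.mpr hl]
  have htraceQ : (E l * (A ν)ᵀ).trace = c * Q l ν * ∑ v, ∑ w, A ν v w := by
    rw [hQ l hl]
    simp only [Matrix.smul_mul, Matrix.sum_mul, trace_smul, trace_sum, smul_eq_mul,
      ← sum_hadamard_eq]
    rw [sum_congr rfl fun μ hμ => by rw [hAA μ ν (mem_range_succ_iff.mp hμ) hν]]
    simp [apply_ite (fun M : Matrix ι ι K => ∑ v, ∑ w, M v w), mem_range_succ_iff.mpr hν,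
      mul_assoc]
  rw [← htraceP, htraceQ]

theorem krein_eq_sum_eigenmatrix
    (hE : LinearIndependent K fun p : Fin (r + 1) => E p)
    (hAA : ∀ μ ν, μ ≤ r → ν ≤ r → A μ ⊙ A ν = if μ = ν then A ν else 0)
    (hEE : ∀ l p, l ≤ r → p ≤ r → (E l * (E p)ᵀ).trace = if l = p then ((E l).rank : K) else 0)
    (hP : ∀ h, h ≤ r → A h = ∑ ℓ ∈ range (r + 1), P h ℓ • E ℓ)
    (hQ : ∀ h, h ≤ r → E h = c • ∑ ℓ ∈ range (r + 1), Q h ℓ • A ℓ)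
    {N : K} {k : ℕ → K} (hsum : ∀ ν, ν ≤ r → ∑ v, ∑ w, A ν v w = N * k ν)
    (hNk : ∀ ν, ν ≤ r → N * k ν ≠ 0)
    {l l' : ℕ} (hl : l ≤ r) (hl' : l' ≤ r) {q : ℕ → K}
    (hq : E l ⊙ E l' = c • ∑ p ∈ range (r + 1), q p • E p) {n : ℕ} (hn : n ≤ r) :
    q n = c⁻¹ * (E l).rank * (E l').rank / N ^ 2 *
      ∑ ν ∈ range (r + 1), 1 / k ν ^ 2 * (P ν l * P ν l' * P ν n) := by
  have hc := ne_zero_of_eq_smul_sum_smul hE hQ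
  have hQP : ∀ l ν, l ≤ r → ν ≤ r → Q l ν = P ν l * (E l).rank / (c * (N * k ν)) :=
    fun l ν hl hν => by
      rw [eq_div_iff (mul_ne_zero hc (hNk ν hν)), ← hsum ν hν, ← mul_assoc, mul_comm (Q l ν)]
      exact dualEigenmatrix_mul_sum_eq_eigenmatrix_mul_rank hAA hEE hP hQ hl hν
  rw [krein_eq_sum_dualEigenmatrix hE hAA hP hQ hl hl' hq hn, mul_sum, mul_sum]
  refine sum_congr rfl fun ν hν => ?_
  rw [hQP l ν hl (mem_range_succ_iff.mp hν), hQP l' ν hl' (mem_range_succ_iff.mp hν)]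
  have hNkν := hNk ν (mem_range_succ_iff.mp hν)
  field_simp

end Block

section CoherentConfiguration

variable {nf : ℕ} {X : Fin nf → Type} {r : Fin nf → Fin nf → ℕ}
  {A E : Fin nf → Fin nf → ℕ → Matrix ((i : Fin nf) × X i) ((i : Fin nf) × X i) ℝ}

theorem relIndex_le_relIndex_swap
    (hAsupp : ∀ i j ℓ, ℓ ≤ r i j → ∀ v w : (i : Fin nf) × X i,
      (v.1 ≠ i ∨ w.1 ≠ j) → A i j ℓ v w = 0)
    (hA01 : ∀ i j ℓ v w, A i j ℓ v w = 0 ∨ A i j ℓ v w = 1)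
    (hApart : ∀ i j (v w : (i : Fin nf) × X i), v.1 = i → w.1 = j →
      ∑ ℓ ∈ Finset.range (r i j + 1), A i j ℓ v w = 1)
    (hAtrans : ∀ i j ℓ, ℓ ≤ r i j → (A i j ℓ)ᵀ = A j i ℓ)
    {i j : Fin nf} (hne : A i j (r i j) ≠ 0) : r i j ≤ r j i := by
  by_contra! hlt
  have hnonneg : ∀ ℓ v w, 0 ≤ A i j ℓ v w := fun ℓ v w => by
    rcases hA01 i j ℓ v w with h | h <;> simp [h]
  refine hne (Matrix.ext fun v w => ?_)
  by_cases hvw : v.1 = i ∧ w.1 = j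
  swap
  · exact hAsupp i j _ le_rfl v w (by tauto)
  have hswap : ∑ ℓ ∈ range (r j i + 1), A i j ℓ v w = 1 := by
    rw [← hApart j i w v hvw.2 hvw.1]
    refine sum_congr rfl fun ℓ hℓ => ?_
    rw [← hAtrans i j ℓ (by grind [mem_range_succ_iff]), transpose_apply]
  have hle : ∑ ℓ ∈ range (r j i + 1), A i j ℓ v w ≤ ∑ ℓ ∈ range (r i j), A i j ℓ v w :=
    sum_le_sum_of_subset_of_nonneg (range_subset_range.mpr hlt) fun ℓ _ _ => hnonneg ℓ v w
  have hpart := hApart i j v w hvw.1 hvw.2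
  rw [sum_range_succ] at hpart
  rw [Matrix.zero_apply]
  exact le_antisymm (by linarith) (hnonneg _ v w)

theorem hadamard_adjacency_eq_ite
    (hAsupp : ∀ i j ℓ, ℓ ≤ r i j → ∀ v w : (i : Fin nf) × X i,
      (v.1 ≠ i ∨ w.1 ≠ j) → A i j ℓ v w = 0)
    (hA01 : ∀ i j ℓ v w, A i j ℓ v w = 0 ∨ A i j ℓ v w = 1)
    (hApart : ∀ i j (v w : (i : Fin nf) × X i), v.1 = i → w.1 = j →
      ∑ ℓ ∈ Finset.range (r i j + 1), A i j ℓ v w = 1)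
    {i j : Fin nf} {μ ν : ℕ} (hμ : μ ≤ r i j) (hν : ν ≤ r i j) :
    A i j μ ⊙ A i j ν = if μ = ν then A i j ν else 0 := by
  refine hadamard_eq_ite_of_zero_one (fun μ _ => hA01 i j μ) (fun v w => ?_)
    (mem_range_succ_iff.mpr hμ) (mem_range_succ_iff.mpr hν)
  by_cases hvw : v.1 = i ∧ w.1 = j
  · exact (hApart i j v w hvw.1 hvw.2).le
  · rw [sum_eq_zero fun ℓ hℓ => hAsupp i j ℓ (mem_range_succ_iff.mp hℓ) v w (by tauto)]
    exact zero_le_one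

variable [∀ i, Fintype (X i)] [∀ i, DecidableEq (X i)]

theorem le_relIndex_diag_of_le {Pm : Fin nf → Fin nf → ℕ → ℕ → ℝ}
    (hA0 : ∀ i, A i i 0 = Matrix.of fun v w => if v = w ∧ v.1 = i then 1 else 0)
    (hEsupp : ∀ i j ℓ, ℓ ≤ r i j → ∀ v w : (i : Fin nf) × X i,
      (v.1 ≠ i ∨ w.1 ≠ j) → E i j ℓ v w = 0)
    (hB2 : ∀ i j, LinearIndependent ℝ (fun ℓ : Fin (r i j + 1) => E i j (ℓ : ℕ)))
    (hB4 : ∀ i j i' j' ℓ ℓ', ℓ ≤ r i j → ℓ' ≤ r i' j' →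
      E i j ℓ * E i' j' ℓ' = if ℓ = ℓ' ∧ j = i' then E i j' ℓ else 0)
    (hP : ∀ i j h, h ≤ r i j →
      A i j h = ∑ ℓ ∈ Finset.range (r i j + 1), Pm i j h ℓ • E i j ℓ)
    {i j : Fin nf} {m : ℕ} (hm : m ≤ r i j) : m ≤ r i i := by
  by_contra! hlt
  refine (hB2 i j).ne_zero ⟨m, by omega⟩ ?_
  have hunit : A i i 0 = diagonal fun v => if v.1 = i then 1 else 0 := by
    rw [hA0]
    ext v w
    by_cases h : v = w <;> simp [h]
  calc E i j m = A i i 0 * E i j m := by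
        ext v w
        rw [hunit, diagonal_mul]
        split_ifs with hv
        · rw [one_mul]
        · rw [zero_mul, hEsupp i j m hm v w (Or.inl hv)]
    _ = ∑ μ ∈ range (r i i + 1), Pm i i 0 μ • (E i i μ * E i j m) := by
        simp only [hP i i 0 (Nat.zero_le _), sum_mul, smul_mul]
    _ = 0 := sum_eq_zero fun μ hμ => by
        rw [hB4 i i i j μ m (mem_range_succ_iff.mp hμ) hm,
          if_neg (by grind [mem_range_succ_iff]), smul_zero]

theorem trace_mul_transpose_eq_ite
    (hB3 : ∀ i j ℓ, ℓ ≤ r i j → (E i j ℓ)ᵀ = E j i ℓ)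
    (hB4 : ∀ i j i' j' ℓ ℓ', ℓ ≤ r i j → ℓ' ≤ r i' j' →
      E i j ℓ * E i' j' ℓ' = if ℓ = ℓ' ∧ j = i' then E i j' ℓ else 0)
    {i j : Fin nf} (hswap : r i j ≤ r j i) {l p : ℕ} (hl : l ≤ r i j) (hdiag : l ≤ r i i)
    (hp : p ≤ r i j) :
    (E i j l * (E i j p)ᵀ).trace = if l = p then ((E i j l).rank : ℝ) else 0 := by
  have hprod : ∀ p, p ≤ r i j → E i j l * (E i j p)ᵀ = if l = p then E i i l else 0 :=
    fun p hp => by rw [hB3 i j p hp, hB4 i j j i l p hl (hp.trans hswap)]; simp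
  have hidem : IsIdempotentElem (E i i l) := by
    rw [IsIdempotentElem, hB4 i i i i l l hdiag hdiag]; simp
  obtain rfl | hne := eq_or_ne l p
  · rw [trace_eq_rank_of_isIdempotentElem (by rwa [hprod l hl, if_pos rfl]),
      rank_self_mul_transpose, if_pos rfl]
  · rw [hprod p hp, if_neg hne, if_neg hne, trace_zero]

end CoherentConfiguration

theorem stmt14_general
    (nf : ℕ) (X : Fin nf → Type) [∀ i, Fintype (X i)] [∀ i, DecidableEq (X i)]
    (r : Fin nf → Fin nf → ℕ)
    (A E : Fin nf → Fin nf → ℕ → Matrix ((i : Fin nf) × X i) ((i : Fin nf) × X i) ℝ)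
    (q : Fin nf → Fin nf → ℕ → ℕ → ℕ → ℝ)
    (Pm Qm : Fin nf → Fin nf → ℕ → ℕ → ℝ)
    (k : Fin nf → Fin nf → ℕ → ℝ)
    (hAsupp : ∀ i j ℓ, ℓ ≤ r i j → ∀ v w : (i : Fin nf) × X i,
      (v.1 ≠ i ∨ w.1 ≠ j) → A i j ℓ v w = 0)
    (hA01 : ∀ i j ℓ v w, A i j ℓ v w = 0 ∨ A i j ℓ v w = 1)
    (hA0 : ∀ i, A i i 0 = Matrix.of fun v w => if v = w ∧ v.1 = i then 1 else 0)
    (hApart : ∀ i j (v w : (i : Fin nf) × X i), v.1 = i → w.1 = j →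
      ∑ ℓ ∈ Finset.range (r i j + 1), A i j ℓ v w = 1)
    (hAtrans : ∀ i j ℓ, ℓ ≤ r i j → (A i j ℓ)ᵀ = A j i ℓ)
    (hk : ∀ i j ℓ, ℓ ≤ r i j → ∀ v : (i : Fin nf) × X i, v.1 = i →
      ∑ w, A i j ℓ v w = k i j ℓ)
    (hEsupp : ∀ i j ℓ, ℓ ≤ r i j → ∀ v w : (i : Fin nf) × X i,
      (v.1 ≠ i ∨ w.1 ≠ j) → E i j ℓ v w = 0)
    (hB2 : ∀ i j, LinearIndependent ℝ (fun ℓ : Fin (r i j + 1) => E i j (ℓ : ℕ)))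
    (hB3 : ∀ i j ℓ, ℓ ≤ r i j → (E i j ℓ)ᵀ = E j i ℓ)
    (hB4 : ∀ i j i' j' ℓ ℓ', ℓ ≤ r i j → ℓ' ≤ r i' j' →
      E i j ℓ * E i' j' ℓ' = if ℓ = ℓ' ∧ j = i' then E i j' ℓ else 0)
    (hq : ∀ i j ℓ m, ℓ ≤ r i j → m ≤ r i j →
      (E i j ℓ).hadamard (E i j m) =
        (Real.sqrt ((Fintype.card (X i) : ℝ) * (Fintype.card (X j) : ℝ)))⁻¹ •
          ∑ n ∈ Finset.range (r i j + 1), q i j ℓ m n • E i j n)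
    (hP : ∀ i j h, h ≤ r i j →
      A i j h = ∑ ℓ ∈ Finset.range (r i j + 1), Pm i j h ℓ • E i j ℓ)
    (hQ : ∀ i j h, h ≤ r i j →
      E i j h = (Real.sqrt ((Fintype.card (X i) : ℝ) * (Fintype.card (X j) : ℝ)))⁻¹ •
        ∑ ℓ ∈ Finset.range (r i j + 1), Qm i j h ℓ • A i j ℓ)
    (i j : Fin nf) (ℓ ℓ' n : ℕ) (hℓ : ℓ ≤ r i j) (hℓ' : ℓ' ≤ r i j) (hn : n ≤ r i j) :
    q i j ℓ ℓ' n =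
      Real.sqrt ((Fintype.card (X i) : ℝ) * (Fintype.card (X j) : ℝ)) *
        ((E i j ℓ).rank : ℝ) * ((E i j ℓ').rank : ℝ) / (Fintype.card (X i) : ℝ) ^ 2 *
        ∑ ν ∈ Finset.range (r i j + 1),
          (1 / (k i j ν) ^ 2) * (Pm i j ν ℓ * Pm i j ν ℓ' * Pm i j ν n) := by
  have hAind := (hB2 i j).of_eq_smul_sum_smul (hQ i j)
  have hswap : r i j ≤ r j i :=
    relIndex_le_relIndex_swap hAsupp hA01 hApart hAtrans (hAind.ne_zero ⟨r i j, by omega⟩)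
  have hsum : ∀ ν, ν ≤ r i j → ∑ v, ∑ w, A i j ν v w = Fintype.card (X i) * k i j ν :=
    fun ν hν => sum_sum_eq_card_mul_of_row_sum
      (fun v w hv => hAsupp i j ν hν v w (Or.inl hv)) (hk i j ν hν)
  have hNk : ∀ ν, ν ≤ r i j → (Fintype.card (X i) : ℝ) * k i j ν ≠ 0 := fun ν hν => by
    rw [← hsum ν hν]
    refine (sum_sum_pos_of_nonneg (fun v w => ?_) (hAind.ne_zero ⟨ν, by omega⟩)).ne'
    rcases hA01 i j ν v w with h | h <;> simp [h]
  have hAA : ∀ μ ν, μ ≤ r i j → ν ≤ r i j →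
      A i j μ ⊙ A i j ν = if μ = ν then A i j ν else 0 :=
    fun μ ν hμ hν => hadamard_adjacency_eq_ite hAsupp hA01 hApart hμ hν
  have hEE : ∀ l p, l ≤ r i j → p ≤ r i j →
      (E i j l * (E i j p)ᵀ).trace = if l = p then ((E i j l).rank : ℝ) else 0 :=
    fun l p hl hp => trace_mul_transpose_eq_ite hB3 hB4 hswap hl
      (le_relIndex_diag_of_le hA0 hEsupp hB2 hB4 hP hl) hp
  rw [krein_eq_sum_eigenmatrix (hB2 i j) hAA hEE (hP i j) (hQ i j) hsum hNk hℓ hℓ'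
    (hq i j ℓ ℓ' hℓ hℓ') hn, inv_inv]

/-- Explicit expression for the Krein numbers of a coherent configuration with basis (B1)-(B4): `q_{ℓ,ℓ',n}^{(i,j)} = (√(|X_i||X_j|) m_ℓ m_{ℓ'} / |X_i|²) Σ_ν p_ν(ℓ) p_ν(ℓ') p_ν(n) / (k_ν)²`. -/
theorem stmt14
    (nf : ℕ) (X : Fin nf → Type) [∀ i, Fintype (X i)] [∀ i, DecidableEq (X i)]
    (r : Fin nf → Fin nf → ℕ)
    (A E : Fin nf → Fin nf → ℕ → Matrix ((i : Fin nf) × X i) ((i : Fin nf) × X i) ℝ)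
    (q : Fin nf → Fin nf → ℕ → ℕ → ℕ → ℝ)
    (Pm Qm : Fin nf → Fin nf → ℕ → ℕ → ℝ)
    (k : Fin nf → Fin nf → ℕ → ℝ)
    (hAsupp : ∀ i j ℓ, ℓ ≤ r i j → ∀ v w : (i : Fin nf) × X i,
      (v.1 ≠ i ∨ w.1 ≠ j) → A i j ℓ v w = 0)
    (hA01 : ∀ i j ℓ v w, A i j ℓ v w = 0 ∨ A i j ℓ v w = 1)
    (hA0 : ∀ i, A i i 0 = Matrix.of fun v w => if v = w ∧ v.1 = i then 1 else 0)
    (hApart : ∀ i j (v w : (i : Fin nf) × X i), v.1 = i → w.1 = j →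
      ∑ ℓ ∈ Finset.range (r i j + 1), A i j ℓ v w = 1)
    (hAtrans : ∀ i j ℓ, ℓ ≤ r i j → (A i j ℓ)ᵀ = A j i ℓ)
    (hk : ∀ i j ℓ, ℓ ≤ r i j → ∀ v : (i : Fin nf) × X i, v.1 = i →
      ∑ w, A i j ℓ v w = k i j ℓ)
    (hEsupp : ∀ i j ℓ, ℓ ≤ r i j → ∀ v w : (i : Fin nf) × X i,
      (v.1 ≠ i ∨ w.1 ≠ j) → E i j ℓ v w = 0)
    (hB1 : ∀ i j, E i j 0 = Matrix.of fun v w =>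
      if v.1 = i ∧ w.1 = j then
        (Real.sqrt ((Fintype.card (X i) : ℝ) * (Fintype.card (X j) : ℝ)))⁻¹ else 0)
    (hB2 : ∀ i j, LinearIndependent ℝ (fun ℓ : Fin (r i j + 1) => E i j (ℓ : ℕ)))
    (hB3 : ∀ i j ℓ, ℓ ≤ r i j → (E i j ℓ)ᵀ = E j i ℓ)
    (hB4 : ∀ i j i' j' ℓ ℓ', ℓ ≤ r i j → ℓ' ≤ r i' j' →
      E i j ℓ * E i' j' ℓ' = if ℓ = ℓ' ∧ j = i' then E i j' ℓ else 0)
    (hq : ∀ i j ℓ m, ℓ ≤ r i j → m ≤ r i j →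
      (E i j ℓ).hadamard (E i j m) =
        (Real.sqrt ((Fintype.card (X i) : ℝ) * (Fintype.card (X j) : ℝ)))⁻¹ •
          ∑ n ∈ Finset.range (r i j + 1), q i j ℓ m n • E i j n)
    (hP : ∀ i j h, h ≤ r i j →
      A i j h = ∑ ℓ ∈ Finset.range (r i j + 1), Pm i j h ℓ • E i j ℓ)
    (hQ : ∀ i j h, h ≤ r i j →
      E i j h = (Real.sqrt ((Fintype.card (X i) : ℝ) * (Fintype.card (X j) : ℝ)))⁻¹ •
        ∑ ℓ ∈ Finset.range (r i j + 1), Qm i j h ℓ • A i j ℓ)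
    (i j : Fin nf) (ℓ ℓ' n : ℕ) (hℓ : ℓ ≤ r i j) (hℓ' : ℓ' ≤ r i j) (hn : n ≤ r i j) :
    q i j ℓ ℓ' n =
      Real.sqrt ((Fintype.card (X i) : ℝ) * (Fintype.card (X j) : ℝ)) *
        ((E i j ℓ).rank : ℝ) * ((E i j ℓ').rank : ℝ) / (Fintype.card (X i) : ℝ) ^ 2 *
        ∑ ν ∈ Finset.range (r i j + 1),
          (1 / (k i j ν) ^ 2) * (Pm i j ν ℓ * Pm i j ν ℓ' * Pm i j ν n) :=
  stmt14_general nf X r A E q Pm Qm k hAsupp hA01 hA0 hApart hAtrans hk hEsupp hB2 hB3 hB4 hq hP hQ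
    i j ℓ ℓ' n hℓ hℓ' hn
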